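/- Let w ∈ I(θ) and let s ∈ S be a right descent of w. Then the map M: v ↦ v·s̲ is a special matching on the Bruhat interval [e, w] ∩ I(θ): it is an involution on this interval such that for each x, either x covers M(x) or M(x) covers x, and for all x, y in the interval with y covering x and M(x) ≠ y, one has M(x) < M(y). -/

import Mathlib

/-!
For a twisted involution `x` and `θ (s i) = s j`, `s j` is a left descent of `x` exactly when
`s i` is a right descent, so `x · s̲` is either `x * s i` or `s j * (x * s i)`, and in the second
case `s j` moves the length of `x * s i` in the same direction as `s i` moves that of `x`.
Applying the lifting property of the Bruhat order on the right (for `s i`) and on the left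
(for `s j`) therefore gives a twisted lifting property: if `u ≤ v` are twisted involutions and
`s i` is a right descent of `v`, then `u · s̲ ≤ v`, `u · s̲ ≤ v · s̲` when `s i` is a descent of
`u`, and `u ≤ v · s̲` otherwise. The matching axioms follow from these inequalities and
antisymmetry.

The lifting property rests on the strong exchange condition, which comes from Bourbaki's
representation of `W` on `W × Bool`: it makes the parity of the number of occurrences of a
reflection in the left inversion sequence of a word depend only on the element the word
represents.
-/

/-- `θ` maps simple reflections to simple reflections. -/
def PreservesSimples {B W : Type*} [Group W] {M : CoxeterMatrix B}
    (cs : CoxeterSystem M W) (θ : W ≃* W) : Prop :=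
  ∀ i : B, ∃ j : B, θ (cs.simple i) = cs.simple j

open Classical in
/-- The twisted action `w · s̲`. -/
noncomputable def twMul {B W : Type*} [Group W] {M : CoxeterMatrix B}
    (cs : CoxeterSystem M W) (θ : W ≃* W) (w : W) (i : B) : W :=
  if θ (cs.simple i) * w * cs.simple i = w then w * cs.simple i
  else θ (cs.simple i) * w * cs.simple i

/-- Action of a word of symbols. -/
noncomputable def twWord {B W : Type*} [Group W] {M : CoxeterMatrix B}
    (cs : CoxeterSystem M W) (θ : W ≃* W) (w : W) (l : List B) : W :=
  l.foldl (twMul cs θ) w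

/-- The Bruhat order on a Coxeter group: `v ≤ w` iff `w = v t₁ ⋯ tₖ` for
reflections `t₁, …, tₖ` with the lengths strictly increasing at each step. -/
def bruhatLE {B W : Type*} [Group W] {M : CoxeterMatrix B}
    (cs : CoxeterSystem M W) (v w : W) : Prop :=
  ∃ l : List W, (∀ t ∈ l, cs.IsReflection t) ∧ l.foldl (· * ·) v = w ∧
    ∀ k < l.length,
      cs.length ((l.take k).foldl (· * ·) v) <
        cs.length ((l.take (k + 1)).foldl (· * ·) v)

/-- The Bruhat interval `[e, w]` inside the twisted involutions `I(θ)`. -/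
def bruhatIntervalTI {B W : Type*} [Group W] {M : CoxeterMatrix B}
    (cs : CoxeterSystem M W) (θ : W ≃* W) (w : W) : Set W :=
  {x : W | θ x = x⁻¹ ∧ bruhatLE cs x w}

/-- `y` covers `x` in the poset `Br(I(θ))` restricted to the interval `[e, w]`. -/
def tiCovers {B W : Type*} [Group W] {M : CoxeterMatrix B}
    (cs : CoxeterSystem M W) (θ : W ≃* W) (w : W) (x y : W) : Prop :=
  x ∈ bruhatIntervalTI cs θ w ∧ y ∈ bruhatIntervalTI cs θ w ∧
    bruhatLE cs x y ∧ x ≠ y ∧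
    ∀ z ∈ bruhatIntervalTI cs θ w, bruhatLE cs x z → bruhatLE cs z y → z = x ∨ z = y

open List

section

variable {B W : Type*} [Group W] {M : CoxeterMatrix B} (cs : CoxeterSystem M W)

local prefix:100 "s" => cs.simple
local prefix:100 "π" => cs.wordProd
local prefix:100 "ℓ" => cs.length
local prefix:100 "lis " => cs.leftInvSeq

namespace CoxeterSystem

section StrongExchange

open scoped Classical

noncomputable def bourbakiPerm (i : B) : Equiv.Perm (W × Bool) :=
  Function.Involutive.toPerm (fun p => (s i * p.1 * s i, xor p.2 (decide (p.1 = s i))))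
    (by rintro ⟨t, b⟩; simp [mul_assoc, mul_eq_one_iff_eq_inv])

theorem bourbakiPerm_apply (i : B) (t : W) (b : Bool) :
    cs.bourbakiPerm i (t, b) = (s i * t * s i, xor b (decide (t = s i))) := rfl

theorem prod_map_bourbakiPerm_apply (ω : List B) (t : W) (b : Bool) :
    (ω.map cs.bourbakiPerm).prod (t, b) =
      (π ω * t * (π ω)⁻¹, xor b (count (π ω * t * (π ω)⁻¹) (lis ω)).bodd) := by
  induction ω with
  | nil => simp
  | cons i ω ih =>
    set t₁ := π ω * t * (π ω)⁻¹
    have ht₁ : π (i :: ω) * t * (π (i :: ω))⁻¹ = MulAut.conj (s i) t₁ := by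
      simp [t₁, wordProd_cons, mul_assoc]
    rw [map_cons, prod_cons, Equiv.Perm.mul_apply, ih, bourbakiPerm_apply, ht₁, leftInvSeq,
      count_cons, count_map_of_injective _ _ (MulAut.conj (s i)).injective]
    by_cases h : t₁ = s i
    · simp [h]
    · have h' : s i ≠ t₁⁻¹ := fun e => h (by rw [← inv_inv t₁, ← e, inv_simple])
      simp [h, h', mul_eq_one_iff_eq_inv]

theorem prod_map_alternatingWord {G : Type*} [Monoid G] (f : B → G) (i i' : B) (m : ℕ) :
    ((alternatingWord i i' (2 * m)).map f).prod = (f i * f i') ^ m := by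
  induction m with
  | zero => simp [alternatingWord]
  | succ m ih =>
    rw [show 2 * (m + 1) = 2 * m + 1 + 1 by ring, alternatingWord_succ', alternatingWord_succ']
    simp [ih, pow_succ', mul_assoc, Nat.not_even_bit1]

theorem leftInvSeq_alternatingWord (i i' : B) (p : ℕ) :
    lis (alternatingWord i i' (2 * p)) =
      (range (2 * p)).map fun k => π (alternatingWord i' i (2 * k + 1)) := by
  apply ext_getElem (by simp)
  intro k hk _
  simp [getElem_leftInvSeq_alternatingWord cs i i' p k (by simpa using hk)]

theorem even_count_leftInvSeq_braidWord (i i' : B) (t : W) :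
    Even (count t (lis (alternatingWord i i' (2 * M i i')))) := by
  have hperiodic : ∀ k, π (alternatingWord i' i (2 * (M i i' + k) + 1)) =
      π (alternatingWord i' i (2 * k + 1)) := by
    intro k
    simp only [prod_alternatingWord_eq_mul_pow, Nat.not_even_bit1, if_false,
      show ∀ n, (2 * n + 1) / 2 = n by omega, pow_add, simple_mul_simple_pow', one_mul]
  rw [leftInvSeq_alternatingWord, two_mul, range_add, map_append, map_map, count_append]
  simp only [Function.comp_def, hperiodic]
  exact Even.add_self _

theorem isLiftable_bourbakiPerm : M.IsLiftable cs.bourbakiPerm := by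
  intro i i'
  ext ⟨t, b⟩ : 1
  have hone : π (alternatingWord i i' (2 * M i i')) = 1 := by
    simp [prod_alternatingWord_eq_mul_pow]
  obtain ⟨n, hn⟩ := even_count_leftInvSeq_braidWord cs i i' t
  rw [← prod_map_alternatingWord, prod_map_bourbakiPerm_apply, hone]
  simp [hn, Nat.bodd_add]

noncomputable def bourbakiRep : W →* Equiv.Perm (W × Bool) :=
  cs.lift ⟨cs.bourbakiPerm, cs.isLiftable_bourbakiPerm⟩

theorem bourbakiRep_simple (i : B) : cs.bourbakiRep (s i) = cs.bourbakiPerm i :=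
  cs.lift_apply_simple _ i

theorem bourbakiRep_wordProd_apply (ω : List B) (t : W) (b : Bool) :
    cs.bourbakiRep (π ω) (t, b) =
      (π ω * t * (π ω)⁻¹, xor b (count (π ω * t * (π ω)⁻¹) (lis ω)).bodd) := by
  rw [← prod_map_bourbakiPerm_apply, wordProd, map_list_prod, map_map]
  simp [Function.comp_def, bourbakiRep_simple]

theorem bourbakiRep_apply (w t : W) (b : Bool) :
    cs.bourbakiRep w (t, b) = (w * t * w⁻¹, xor b (cs.bourbakiRep w (t, false)).2) := by
  obtain ⟨ω, rfl⟩ := cs.wordProd_surjective w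
  simp [bourbakiRep_wordProd_apply]

theorem bourbakiRep_apply_self {t : W} (ht : cs.IsReflection t) (b : Bool) :
    cs.bourbakiRep t (t, b) = (t, !b) := by
  obtain ⟨u, i, rfl⟩ := ht
  set c := (cs.bourbakiRep u (s i, false)).2
  have hu : ∀ b, cs.bourbakiRep u (s i, b) = (u * s i * u⁻¹, xor b c) :=
    fun b => cs.bourbakiRep_apply u (s i) b
  have hu_inv : (cs.bourbakiRep u)⁻¹ (u * s i * u⁻¹, b) = (s i, xor b c) := by
    rw [Equiv.Perm.inv_eq_iff_eq, hu]
    simp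
  rw [map_mul, map_mul, map_inv, Equiv.Perm.mul_apply, Equiv.Perm.mul_apply, hu_inv,
    bourbakiRep_simple, bourbakiPerm_apply, simple_mul_simple_cancel_right, hu]
  simp

theorem mem_leftInvSeq_of_isLeftInversion {ω : List B} {t : W}
    (ht : cs.IsLeftInversion (π ω) t) : t ∈ lis ω := by
  obtain ⟨htr, hlt⟩ := ht
  obtain ⟨η, hη, htω⟩ := cs.exists_isReduced (t * π ω)
  have hωη : π ω = t * π η := by rw [← htω, ← mul_assoc, htr.mul_self, one_mul]
  have hη_not : t ∉ lis η := fun hmem => by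
    have := (cs.isLeftInversion_of_mem_leftInvSeq hη hmem).2
    rw [← htω, ← mul_assoc, htr.mul_self, one_mul] at this
    omega
  -- The flag of `bourbakiRep (π ω)` at `x` is read off along `ω` and along `π ω = t * π η`.
  set x := (π ω)⁻¹ * t * π ω
  have hη_flag : cs.bourbakiRep (π η) (x, false) = (t, false) := by
    have hconj : π η * x * (π η)⁻¹ = t := by
      simp [x, ← htω, mul_assoc, htr.inv, htr.mul_self]
    rw [bourbakiRep_wordProd_apply, hconj, count_eq_zero.mpr hη_not]
    rfl
  have hω_flag := cs.bourbakiRep_wordProd_apply ω x false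
  rw [hωη, map_mul, Equiv.Perm.mul_apply, hη_flag, bourbakiRep_apply_self cs htr, ← hωη]
    at hω_flag
  have hconj : π ω * x * (π ω)⁻¹ = t := by simp [x, mul_assoc]
  rw [hconj, Prod.mk.injEq] at hω_flag
  apply count_pos_iff.mp
  by_contra hzero
  simp [Nat.eq_zero_of_not_pos hzero] at hω_flag

theorem exists_eraseIdx_of_isLeftInversion {ω : List B} {t : W}
    (ht : cs.IsLeftInversion (π ω) t) : ∃ j < ω.length, t * π ω = π (ω.eraseIdx j) := by
  obtain ⟨j, hj, rfl⟩ := mem_iff_getElem.mp (cs.mem_leftInvSeq_of_isLeftInversion ht)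
  exact ⟨j, by simpa using hj, by rw [← getD_eq_getElem _ 1 hj, getD_leftInvSeq_mul_wordProd]⟩

theorem exists_eraseIdx_of_isRightInversion {ω : List B} {t : W}
    (ht : cs.IsRightInversion (π ω) t) : ∃ j < ω.length, π ω * t = π (ω.eraseIdx j) := by
  have hconj : π ω * t * (π ω)⁻¹ * π ω = π ω * t := by group
  have : cs.IsLeftInversion (π ω) (π ω * t * (π ω)⁻¹) :=
    ⟨ht.1.conj _, by rw [hconj]; exact ht.2⟩
  simpa [hconj] using cs.exists_eraseIdx_of_isLeftInversion this

end StrongExchange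

theorem exists_reduced_sublist (ω : List B) :
    ∃ ρ, ρ <+ ω ∧ cs.IsReduced ρ ∧ π ρ = π ω := by
  induction ω with
  | nil => exact ⟨[], Sublist.slnil, by simp [IsReduced], rfl⟩
  | cons i ω ih =>
    obtain ⟨ρ, hρω, hρ, hπ⟩ := ih
    by_cases hdesc : cs.IsLeftDescent (π ρ) i
    · obtain ⟨j, hj, heq⟩ := cs.exists_eraseIdx_of_isLeftInversion
        ⟨cs.isReflection_simple i, hdesc⟩
      refine ⟨ρ.eraseIdx j, (eraseIdx_sublist ρ j).trans (hρω.trans (sublist_cons_self i ω)),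
        ?_, by rw [← heq, hπ, wordProd_cons]⟩
      have := cs.isLeftDescent_iff.mp hdesc
      have := length_eraseIdx_add_one hj
      have := hρ.eq
      rw [IsReduced, ← heq]
      omega
    · refine ⟨i :: ρ, hρω.cons_cons i, ?_, by rw [wordProd_cons, wordProd_cons, hπ]⟩
      have := cs.not_isLeftDescent_iff.mp hdesc
      have := hρ.eq
      rw [IsReduced, wordProd_cons, length_cons]
      omega

def BruhatStep (u v : W) : Prop := ∃ t, cs.IsReflection t ∧ v = u * t ∧ ℓ u < ℓ v

end CoxeterSystem

variable {cs} {u v w : W} {i : B}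

theorem bruhatLE_iff_reflTransGen :
    bruhatLE cs u v ↔ Relation.ReflTransGen cs.BruhatStep u v := by
  constructor
  · rintro ⟨l, hl, rfl, hlen⟩
    induction l generalizing u with
    | nil => rfl
    | cons t l ih =>
      refine .head ⟨t, hl t mem_cons_self, rfl, by simpa using hlen 0 (by simp)⟩ (ih ?_ ?_)
      · exact fun t' ht' => hl t' (mem_cons_of_mem t ht')
      · exact fun k hk => by simpa using hlen (k + 1) (by simpa using hk)
  · intro h
    induction h using Relation.ReflTransGen.head_induction_on with
    | refl => exact ⟨[], by simp, rfl, by simp⟩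
    | head hstep _ ih =>
      obtain ⟨t, ht, rfl, hlt⟩ := hstep
      obtain ⟨l, hl, hprod, hlen⟩ := ih
      refine ⟨t :: l, forall_mem_cons.mpr ⟨ht, hl⟩, hprod, ?_⟩
      rintro (_ | k) hk
      · simpa using hlt
      · simpa using hlen k (by simpa using hk)

variable (cs) in
theorem bruhatLE_refl (u : W) : bruhatLE cs u u := bruhatLE_iff_reflTransGen.mpr .refl

theorem bruhatLE.trans (huv : bruhatLE cs u v) (hvw : bruhatLE cs v w) : bruhatLE cs u w :=
  bruhatLE_iff_reflTransGen.mpr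
    ((bruhatLE_iff_reflTransGen.mp huv).trans (bruhatLE_iff_reflTransGen.mp hvw))

theorem bruhatLE_mul_reflection {t : W} (ht : cs.IsReflection t) (h : ℓ u < ℓ (u * t)) :
    bruhatLE cs u (u * t) :=
  bruhatLE_iff_reflTransGen.mpr (.single ⟨t, ht, rfl, h⟩)

theorem bruhatLE.length_le (h : bruhatLE cs u v) : ℓ u ≤ ℓ v := by
  rw [bruhatLE_iff_reflTransGen] at h
  induction h with
  | refl => rfl
  | tail _ hstep ih =>
    obtain ⟨t, -, rfl, hlt⟩ := hstep
    exact ih.trans hlt.le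

theorem bruhatLE.eq_of_length_le (h : bruhatLE cs u v) (hl : ℓ v ≤ ℓ u) : u = v := by
  rcases (bruhatLE_iff_reflTransGen.mp h).cases_tail with rfl | ⟨v', hv', t, -, rfl, hlt⟩
  · rfl
  · have := (bruhatLE_iff_reflTransGen.mpr hv').length_le
    omega

theorem bruhatLE.antisymm (huv : bruhatLE cs u v) (hvu : bruhatLE cs v u) : u = v :=
  huv.eq_of_length_le hvu.length_le

theorem bruhatLE.inv (h : bruhatLE cs u v) : bruhatLE cs u⁻¹ v⁻¹ := by
  rw [bruhatLE_iff_reflTransGen] at h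
  induction h with
  | refl => exact bruhatLE_refl cs _
  | @tail v' _ _ hstep ih =>
    obtain ⟨t, ht, rfl, hlt⟩ := hstep
    have hconj : v'⁻¹ * (v' * t * v'⁻¹) = (v' * t)⁻¹ := by rw [mul_inv_rev, ht.inv]; group
    refine ih.trans ?_
    rw [← hconj]
    exact bruhatLE_mul_reflection (ht.conj v') (by rwa [hconj, cs.length_inv, cs.length_inv])

theorem bruhatLE_inv_iff : bruhatLE cs u⁻¹ v⁻¹ ↔ bruhatLE cs u v :=
  ⟨fun h => by simpa using h.inv, bruhatLE.inv⟩

theorem bruhatLE_reflection_mul {t : W} (ht : cs.IsReflection t) (h : ℓ u < ℓ (t * u)) :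
    bruhatLE cs u (t * u) := by
  have hinv : u⁻¹ * t = (t * u)⁻¹ := by rw [mul_inv_rev, ht.inv]
  rw [← bruhatLE_inv_iff, ← hinv]
  exact bruhatLE_mul_reflection ht (by rwa [hinv, cs.length_inv, cs.length_inv])

theorem bruhatLE_mul_simple (h : ¬cs.IsRightDescent u i) : bruhatLE cs u (u * s i) :=
  bruhatLE_mul_reflection (cs.isReflection_simple i) (by rw [cs.not_isRightDescent_iff] at h; omega)

theorem bruhatLE_simple_mul (h : ¬cs.IsLeftDescent u i) : bruhatLE cs u (s i * u) :=
  bruhatLE_reflection_mul (cs.isReflection_simple i) (by rw [cs.not_isLeftDescent_iff] at h; omega)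

theorem mul_simple_bruhatLE (h : cs.IsRightDescent u i) : bruhatLE cs (u * s i) u := by
  simpa using bruhatLE_mul_simple (u := u * s i) (i := i)
    (cs.isRightDescent_iff_not_isRightDescent_mul.mp h)

theorem simple_mul_bruhatLE (h : cs.IsLeftDescent u i) : bruhatLE cs (s i * u) u := by
  simpa using bruhatLE_simple_mul (u := s i * u) (i := i)
    (cs.isLeftDescent_iff_not_isLeftDescent_mul.mp h)

theorem bruhatLE.exists_sublist (h : bruhatLE cs u v) {ω : List B} (hω : cs.IsReduced ω)
    (hv : π ω = v) : ∃ ω', ω' <+ ω ∧ cs.IsReduced ω' ∧ π ω' = u := by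
  rw [bruhatLE_iff_reflTransGen] at h
  induction h generalizing ω with
  | refl => exact ⟨ω, Sublist.refl ω, hω, hv⟩
  | @tail v' _ _ hstep ih =>
    obtain ⟨t, ht, rfl, hlt⟩ := hstep
    have hcancel : π ω * t = v' := by rw [hv, mul_assoc, ht.mul_self, mul_one]
    obtain ⟨j, -, hj⟩ :=
      cs.exists_eraseIdx_of_isRightInversion (ω := ω) ⟨ht, by rwa [hcancel, hv]⟩
    obtain ⟨ρ, hρ, hρred, hρπ⟩ := cs.exists_reduced_sublist (ω.eraseIdx j)
    obtain ⟨ω', hω', hω'red, hω'π⟩ := ih hρred (by rw [hρπ, ← hj, hcancel])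
    exact ⟨ω', hω'.trans (hρ.trans (eraseIdx_sublist ω j)), hω'red, hω'π⟩

namespace CoxeterSystem

variable (cs)

/- The subword property, monotonicity of right multiplication by a common ascent, and the lifting
property are proved simultaneously by strong induction on the length of the larger element. -/
def SublistBruhatLEAt (n : ℕ) : Prop :=
  ∀ ω : List B, cs.IsReduced ω → ω.length = n → ∀ ω', ω' <+ ω → bruhatLE cs (π ω') (π ω)

def MulSimpleMonotoneAt (n : ℕ) : Prop :=
  ∀ (u v : W) (i : B), bruhatLE cs u v → ℓ v = n → ¬cs.IsRightDescent u i →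
    ¬cs.IsRightDescent v i → bruhatLE cs (u * s i) (v * s i)

def LiftingAt (n : ℕ) : Prop :=
  ∀ (u w : W) (i : B), bruhatLE cs u w → ℓ w = n → cs.IsRightDescent w i →
    ¬cs.IsRightDescent u i → bruhatLE cs u (w * s i)

variable {cs} {n : ℕ}

theorem sublistBruhatLEAt_of_lt (h₁ : ∀ m < n, cs.SublistBruhatLEAt m)
    (h₂ : ∀ m < n, cs.MulSimpleMonotoneAt m) : cs.SublistBruhatLEAt n := by
  intro ω hω hn ω' hω'
  rcases eq_nil_or_concat' ω with rfl | ⟨ζ, i, rfl⟩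
  · rw [sublist_nil.mp hω']
    exact bruhatLE_refl cs _
  have hζ : cs.IsReduced ζ := by simpa using hω.take ζ.length
  have hlen : ζ.length < n := by simp at hn; omega
  have hζi : π (ζ ++ [i]) = π ζ * s i := by simp [wordProd_append]
  have hasc : ¬cs.IsRightDescent (π ζ) i := by
    have := hω.eq
    rw [hζi, length_append, length_singleton] at this
    rw [cs.not_isRightDescent_iff, this, hζ.eq]
  obtain ⟨l₁, l₂, rfl, hl₁, hl₂⟩ := sublist_append_iff.mp hω'
  have hle : bruhatLE cs (π l₁) (π ζ) := h₁ _ hlen ζ hζ rfl l₁ hl₁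
  rw [hζi]
  rcases sublist_singleton.mp hl₂ with rfl | rfl
  · simpa using hle.trans (bruhatLE_mul_simple hasc)
  · rw [wordProd_append, wordProd_singleton]
    by_cases hdesc : cs.IsRightDescent (π l₁) i
    · exact (mul_simple_bruhatLE hdesc).trans (hle.trans (bruhatLE_mul_simple hasc))
    · exact h₂ _ hlen _ _ i hle hζ.eq hdesc hasc

theorem mulSimpleMonotoneAt_of_lt (h₂ : ∀ m < n, cs.MulSimpleMonotoneAt m)
    (h₃ : ∀ m < n, cs.LiftingAt m) : cs.MulSimpleMonotoneAt n := by
  intro u v i huv hn hu hv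
  rcases (bruhatLE_iff_reflTransGen.mp huv).cases_tail with rfl | ⟨v', hv', t, ht, rfl, hlt⟩
  · exact bruhatLE_refl cs _
  have huv' : bruhatLE cs u v' := bruhatLE_iff_reflTransGen.mpr hv'
  have hlen : ℓ v' < n := hn ▸ hlt
  by_cases hdesc : cs.IsRightDescent v' i
  · have hle : bruhatLE cs u (v' * s i) := h₃ _ hlen u v' i huv' rfl hdesc hu
    have hlen' : ℓ (v' * s i) < n := by have := cs.isRightDescent_iff.mp hdesc; omega
    have hle' : bruhatLE cs (u * s i) v' := by
      simpa using h₂ _ hlen' u (v' * s i) i hle rfl hu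
        (cs.isRightDescent_iff_not_isRightDescent_mul.mp hdesc)
    exact hle'.trans ((bruhatLE_mul_reflection ht hlt).trans (bruhatLE_mul_simple hv))
  · -- `v' * s i ≤ v' * t * s i` is a step by the reflection `s i * t * s i`
    refine (h₂ _ hlen u v' i huv' rfl hu hdesc).trans ?_
    have heq : v' * s i * (s i * t * s i) = v' * t * s i := by simp [mul_assoc]
    rw [← heq]
    refine bruhatLE_mul_reflection (by simpa using ht.conj (s i)) ?_
    rw [heq, cs.not_isRightDescent_iff.mp hdesc, cs.not_isRightDescent_iff.mp hv]
    omega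

theorem liftingAt_of_lt (h₁ : ∀ m < n, cs.SublistBruhatLEAt m) : cs.LiftingAt n := by
  intro u w i huw hn hw hu
  obtain ⟨ζ, hζ, hζπ⟩ := cs.exists_isReduced (w * s i)
  have hw' : π (ζ ++ [i]) = w := by
    rw [wordProd_append, wordProd_singleton, ← hζπ, simple_mul_simple_cancel_right]
  have hlen : ℓ (w * s i) + 1 = ℓ w := cs.isRightDescent_iff.mp hw
  have hred : cs.IsReduced (ζ ++ [i]) := by
    rw [IsReduced, hw', length_append, length_singleton, ← hζ.eq, ← hζπ, hlen]
  obtain ⟨ω', hω', hω'red, rfl⟩ := huw.exists_sublist hred hw'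
  obtain ⟨l₁, l₂, rfl, hl₁, hl₂⟩ := sublist_append_iff.mp hω'
  rcases sublist_singleton.mp hl₂ with rfl | rfl
  · have : ζ.length < n := by rw [← hζ.eq, ← hζπ]; omega
    rw [append_nil, hζπ]
    exact h₁ _ this ζ hζ rfl l₁ hl₁
  · -- a reduced subword ending in `i` would make `i` a right descent of `u`
    refine absurd ?_ hu
    have hred' := hω'red.eq
    rw [wordProd_append, wordProd_singleton, length_append, length_singleton] at hred'
    have := cs.length_wordProd_le l₁
    rw [IsRightDescent, wordProd_append, wordProd_singleton, simple_mul_simple_cancel_right]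
    omega

variable (cs) in
theorem sublistBruhatLEAt_and_mulSimpleMonotoneAt_and_liftingAt (n : ℕ) :
    cs.SublistBruhatLEAt n ∧ cs.MulSimpleMonotoneAt n ∧ cs.LiftingAt n := by
  induction n using Nat.strong_induction_on with
  | _ n ih =>
    have h₁ := fun m hm => (ih m hm).1
    have h₂ := fun m hm => (ih m hm).2.1
    exact ⟨sublistBruhatLEAt_of_lt h₁ h₂, mulSimpleMonotoneAt_of_lt h₂ fun m hm => (ih m hm).2.2,
      liftingAt_of_lt h₁⟩

end CoxeterSystem

theorem bruhatLE.mul_simple_mul_simple_of_not_isRightDescent (huv : bruhatLE cs u v)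
    (hu : ¬cs.IsRightDescent u i) (hv : ¬cs.IsRightDescent v i) :
    bruhatLE cs (u * s i) (v * s i) :=
  (cs.sublistBruhatLEAt_and_mulSimpleMonotoneAt_and_liftingAt (ℓ v)).2.1 u v i huv rfl hu hv

theorem bruhatLE.le_mul_simple_of_isRightDescent (huw : bruhatLE cs u w)
    (hw : cs.IsRightDescent w i) (hu : ¬cs.IsRightDescent u i) : bruhatLE cs u (w * s i) :=
  (cs.sublistBruhatLEAt_and_mulSimpleMonotoneAt_and_liftingAt (ℓ w)).2.2 u w i huw rfl hw hu

theorem bruhatLE.mul_simple_le_of_isRightDescent (huw : bruhatLE cs u w)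
    (hw : cs.IsRightDescent w i) : bruhatLE cs (u * s i) w := by
  by_cases hu : cs.IsRightDescent u i
  · exact (mul_simple_bruhatLE hu).trans huw
  · have hle := huw.le_mul_simple_of_isRightDescent hw hu
    simpa using hle.mul_simple_mul_simple_of_not_isRightDescent hu
      (cs.isRightDescent_iff_not_isRightDescent_mul.mp hw)

theorem bruhatLE.mul_simple_mul_simple_of_isRightDescent (huw : bruhatLE cs u w)
    (hw : cs.IsRightDescent w i) (hu : cs.IsRightDescent u i) :
    bruhatLE cs (u * s i) (w * s i) :=
  (huw.mul_simple_le_of_isRightDescent hw).le_mul_simple_of_isRightDescent hw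
    (cs.isRightDescent_iff_not_isRightDescent_mul.mp hu)

theorem bruhatLE.simple_mul_simple_mul_of_not_isLeftDescent (huv : bruhatLE cs u v)
    (hu : ¬cs.IsLeftDescent u i) (hv : ¬cs.IsLeftDescent v i) :
    bruhatLE cs (s i * u) (s i * v) := by
  rw [← bruhatLE_inv_iff, mul_inv_rev, mul_inv_rev, cs.inv_simple]
  rw [← cs.isRightDescent_inv_iff] at hu hv
  exact huv.inv.mul_simple_mul_simple_of_not_isRightDescent hu hv

theorem bruhatLE.le_simple_mul_of_isLeftDescent (huw : bruhatLE cs u w)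
    (hw : cs.IsLeftDescent w i) (hu : ¬cs.IsLeftDescent u i) : bruhatLE cs u (s i * w) := by
  rw [← bruhatLE_inv_iff, mul_inv_rev, cs.inv_simple]
  rw [← cs.isRightDescent_inv_iff] at hu hw
  exact huw.inv.le_mul_simple_of_isRightDescent hw hu

theorem bruhatLE.simple_mul_le_of_isLeftDescent (huw : bruhatLE cs u w)
    (hw : cs.IsLeftDescent w i) : bruhatLE cs (s i * u) w := by
  rw [← bruhatLE_inv_iff, mul_inv_rev, cs.inv_simple]
  rw [← cs.isRightDescent_inv_iff] at hw
  exact huw.inv.mul_simple_le_of_isRightDescent hw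

theorem bruhatLE.simple_mul_simple_mul_of_isLeftDescent (huw : bruhatLE cs u w)
    (hw : cs.IsLeftDescent w i) (hu : cs.IsLeftDescent u i) :
    bruhatLE cs (s i * u) (s i * w) := by
  rw [← bruhatLE_inv_iff, mul_inv_rev, mul_inv_rev, cs.inv_simple]
  rw [← cs.isRightDescent_inv_iff] at hu hw
  exact huw.inv.mul_simple_mul_simple_of_isRightDescent hw hu

theorem CoxeterSystem.simple_mul_mul_simple_eq_self {j : B} (hi : ¬cs.IsRightDescent v i)
    (hj : ¬cs.IsLeftDescent v j) (hji : cs.IsLeftDescent (v * s i) j) : s j * v * s i = v := by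
  have hle := (bruhatLE_mul_simple hi).le_simple_mul_of_isLeftDescent hji hj
  rw [← mul_assoc] at hle
  refine (hle.eq_of_length_le ?_).symm
  have := cs.isLeftDescent_iff.mp hji
  have := cs.not_isRightDescent_iff.mp hi
  rw [mul_assoc]
  omega

section TwistedInvolutions

variable {θ : W ≃* W} {x : W}

theorem PreservesSimples.length_apply (hS : PreservesSimples cs θ) (hinv : ∀ w, θ (θ w) = w)
    (w : W) : ℓ (θ w) = ℓ w := by
  have hle : ∀ w, ℓ (θ w) ≤ ℓ w := by
    choose f hf using hS
    intro w
    obtain ⟨ω, hω, rfl⟩ := cs.exists_isReduced w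
    have hθω : θ (π ω) = π (ω.map f) := by
      simp only [CoxeterSystem.wordProd, map_list_prod, map_map]
      exact congrArg prod (map_congr_left fun i _ => hf i)
    calc ℓ (θ (π ω)) = ℓ (π (ω.map f)) := by rw [hθω]
      _ ≤ (ω.map f).length := cs.length_wordProd_le _
      _ = ℓ (π ω) := by rw [length_map, hω.eq]
  exact le_antisymm (hle w) (by simpa [hinv] using hle (θ w))

theorem PreservesSimples.isLeftDescent_iff (hS : PreservesSimples cs θ)
    (hinv : ∀ w, θ (θ w) = w) (hx : θ x = x⁻¹) {j : B} (hj : θ (s i) = s j) :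
    cs.IsLeftDescent x j ↔ cs.IsRightDescent x i := by
  have hlen : ℓ (s j * x) = ℓ (x * s i) := by
    rw [← hS.length_apply hinv (x * s i), map_mul, hx, hj, ← cs.length_inv (s j * x),
      mul_inv_rev, cs.inv_simple]
  rw [CoxeterSystem.IsLeftDescent, CoxeterSystem.IsRightDescent, hlen]

theorem twMul_cases (hS : PreservesSimples cs θ) (hinv : ∀ w, θ (θ w) = w) (hx : θ x = x⁻¹)
    {j : B} (hj : θ (s i) = s j) :
    (twMul cs θ x i = x * s i ∧ (cs.IsLeftDescent (x * s i) j ↔ ¬cs.IsRightDescent x i)) ∨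
      (twMul cs θ x i = s j * (x * s i) ∧
        (cs.IsLeftDescent (x * s i) j ↔ cs.IsRightDescent x i)) := by
  by_cases h : θ (s i) * x * s i = x
  · refine .inl ⟨if_pos h, ?_⟩
    rw [hj, mul_assoc] at h
    rw [CoxeterSystem.IsLeftDescent, h, CoxeterSystem.IsRightDescent, not_lt]
    exact ⟨le_of_lt, fun hle => lt_of_le_of_ne hle (cs.length_mul_simple_ne x i).symm⟩
  · refine .inr ⟨by rw [twMul, if_neg h, hj, mul_assoc], ?_⟩
    rw [hj] at h
    have hxj := hS.isLeftDescent_iff hinv hx hj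
    -- in either direction a counterexample would give `s j * x * s i = x`
    constructor
    · intro hdesc
      by_contra hasc
      exact h (cs.simple_mul_mul_simple_eq_self hasc (hxj.not.mpr hasc) hdesc)
    · intro hdesc
      by_contra hasc
      have hxi := cs.isRightDescent_iff_not_isRightDescent_mul.mp hdesc
      have := cs.simple_mul_mul_simple_eq_self hxi hasc (by simpa using hxj.mpr hdesc)
      rw [← mul_assoc, cs.simple_mul_simple_cancel_right] at this
      exact h (by rw [this, cs.simple_mul_simple_cancel_right])

variable (cs θ) in
theorem twMul_twMul (x : W) (i : B) : twMul cs θ (twMul cs θ x i) i = x := by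
  have hsq : θ (s i) * θ (s i) = 1 := by rw [← map_mul, cs.simple_mul_simple_self, map_one]
  by_cases h : θ (s i) * x * s i = x
  · have h' : θ (s i) * (x * s i) * s i = x * s i := by rw [← mul_assoc, h]
    rw [show twMul cs θ x i = x * s i from if_pos h, twMul, if_pos h',
      cs.simple_mul_simple_cancel_right]
  · have h' : θ (s i) * (θ (s i) * x * s i) * s i = x := by
      simp [← mul_assoc, hsq, mul_assoc _ (s i) (s i)]
    rw [show twMul cs θ x i = θ (s i) * x * s i from if_neg h, twMul, h', if_neg (Ne.symm h)]

variable (cs θ) in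
theorem twMul_ne_self (x : W) (i : B) : twMul cs θ x i ≠ x := by
  unfold twMul
  split_ifs with h
  · exact fun h' => cs.length_mul_simple_ne x i (congrArg cs.length h')
  · exact h

theorem apply_twMul (hinv : ∀ w, θ (θ w) = w) (hx : θ x = x⁻¹) :
    θ (twMul cs θ x i) = (twMul cs θ x i)⁻¹ := by
  have hθs : (θ (s i))⁻¹ = θ (s i) := by rw [← map_inv, cs.inv_simple]
  unfold twMul
  split_ifs with h
  · have h' : x⁻¹ * θ (s i) = s i * x⁻¹ := by
      have hx' : s i * x⁻¹ * θ (s i) = x⁻¹ := by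
        simpa [mul_inv_rev, hθs, mul_assoc] using congrArg (·⁻¹) h
      calc x⁻¹ * θ (s i) = s i * x⁻¹ * θ (s i) * θ (s i) := by rw [hx']
        _ = s i * x⁻¹ := by rw [mul_assoc, ← map_mul, cs.simple_mul_simple_self, map_one, mul_one]
    rw [map_mul, hx, mul_inv_rev, cs.inv_simple, h']
  · rw [map_mul, map_mul, hx, hinv, mul_inv_rev, mul_inv_rev, cs.inv_simple, hθs, mul_assoc]

theorem bruhatLE_twMul (hS : PreservesSimples cs θ) (hinv : ∀ w, θ (θ w) = w)
    (hx : θ x = x⁻¹) (hxi : ¬cs.IsRightDescent x i) : bruhatLE cs x (twMul cs θ x i) := by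
  obtain ⟨j, hj⟩ := hS i
  have hle := bruhatLE_mul_simple hxi
  rcases twMul_cases hS hinv hx hj with ⟨heq, -⟩ | ⟨heq, hxj⟩ <;> rw [heq]
  · exact hle
  · exact hle.trans (bruhatLE_simple_mul (hxj.not.mpr hxi))

theorem twMul_bruhatLE (hS : PreservesSimples cs θ) (hinv : ∀ w, θ (θ w) = w)
    (hx : θ x = x⁻¹) (hxi : cs.IsRightDescent x i) : bruhatLE cs (twMul cs θ x i) x := by
  obtain ⟨j, hj⟩ := hS i
  have hle := mul_simple_bruhatLE hxi
  rcases twMul_cases hS hinv hx hj with ⟨heq, -⟩ | ⟨heq, hxj⟩ <;> rw [heq]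
  · exact hle
  · exact (simple_mul_bruhatLE (hxj.mpr hxi)).trans hle

theorem isRightDescent_twMul_iff (hS : PreservesSimples cs θ) (hinv : ∀ w, θ (θ w) = w)
    (hx : θ x = x⁻¹) : cs.IsRightDescent (twMul cs θ x i) i ↔ ¬cs.IsRightDescent x i := by
  have hMx := apply_twMul (cs := cs) (i := i) hinv hx
  constructor
  · intro hM hxi
    have hle := twMul_bruhatLE hS hinv hMx hM
    rw [twMul_twMul] at hle
    exact twMul_ne_self cs θ x i (twMul_bruhatLE hS hinv hx hxi |>.antisymm hle)
  · intro hxi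
    by_contra hM
    have hle := bruhatLE_twMul hS hinv hMx hM
    rw [twMul_twMul] at hle
    exact twMul_ne_self cs θ x i (hle.antisymm (bruhatLE_twMul hS hinv hx hxi))

theorem bruhatLE.twMul_le_of_isRightDescent (hS : PreservesSimples cs θ)
    (hinv : ∀ w, θ (θ w) = w) (huv : bruhatLE cs u v) (hv : θ v = v⁻¹)
    (hvi : cs.IsRightDescent v i) : bruhatLE cs (twMul cs θ u i) v := by
  obtain ⟨j, hj⟩ := hS i
  have hle := huv.mul_simple_le_of_isRightDescent hvi
  unfold twMul
  split_ifs
  · exact hle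
  · rw [hj, mul_assoc]
    exact hle.simple_mul_le_of_isLeftDescent ((hS.isLeftDescent_iff hinv hv hj).mpr hvi)

theorem bruhatLE.le_twMul_of_isRightDescent (hS : PreservesSimples cs θ)
    (hinv : ∀ w, θ (θ w) = w) (huv : bruhatLE cs u v) (hu : θ u = u⁻¹) (hv : θ v = v⁻¹)
    (hvi : cs.IsRightDescent v i) (hui : ¬cs.IsRightDescent u i) :
    bruhatLE cs u (twMul cs θ v i) := by
  obtain ⟨j, hj⟩ := hS i
  have hle := huv.le_mul_simple_of_isRightDescent hvi hui
  rcases twMul_cases hS hinv hv hj with ⟨heq, -⟩ | ⟨heq, hvj⟩ <;> rw [heq]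
  · exact hle
  · exact hle.le_simple_mul_of_isLeftDescent (hvj.mpr hvi)
      ((hS.isLeftDescent_iff hinv hu hj).not.mpr hui)

theorem bruhatLE.twMul_mono_of_isRightDescent (hS : PreservesSimples cs θ)
    (hinv : ∀ w, θ (θ w) = w) (huv : bruhatLE cs u v) (hu : θ u = u⁻¹) (hv : θ v = v⁻¹)
    (hvi : cs.IsRightDescent v i) (hui : cs.IsRightDescent u i) :
    bruhatLE cs (twMul cs θ u i) (twMul cs θ v i) := by
  obtain ⟨j, hj⟩ := hS i
  have hle := huv.mul_simple_mul_simple_of_isRightDescent hvi hui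
  rcases twMul_cases hS hinv hu hj with ⟨hu_eq, huj⟩ | ⟨hu_eq, huj⟩ <;>
    rcases twMul_cases hS hinv hv hj with ⟨hv_eq, hvj⟩ | ⟨hv_eq, hvj⟩ <;> rw [hu_eq, hv_eq]
  · exact hle
  · exact hle.le_simple_mul_of_isLeftDescent (hvj.mpr hvi) fun h => huj.mp h hui
  · exact (simple_mul_bruhatLE (huj.mpr hui)).trans hle
  · exact hle.simple_mul_simple_mul_of_isLeftDescent (hvj.mpr hvi) (huj.mpr hui)

theorem bruhatLE.twMul_mono_of_not_isRightDescent (hS : PreservesSimples cs θ)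
    (hinv : ∀ w, θ (θ w) = w) (huv : bruhatLE cs u v) (hu : θ u = u⁻¹) (hv : θ v = v⁻¹)
    (hui : ¬cs.IsRightDescent u i) (hvi : ¬cs.IsRightDescent v i) :
    bruhatLE cs (twMul cs θ u i) (twMul cs θ v i) := by
  obtain ⟨j, hj⟩ := hS i
  have hle := huv.mul_simple_mul_simple_of_not_isRightDescent hui hvi
  rcases twMul_cases hS hinv hu hj with ⟨hu_eq, huj⟩ | ⟨hu_eq, huj⟩ <;>
    rcases twMul_cases hS hinv hv hj with ⟨hv_eq, hvj⟩ | ⟨hv_eq, hvj⟩ <;> rw [hu_eq, hv_eq]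
  · exact hle
  · exact hle.trans (bruhatLE_simple_mul (hvj.not.mpr hvi))
  · exact hle.simple_mul_le_of_isLeftDescent (hvj.mpr hvi)
  · exact hle.simple_mul_simple_mul_of_not_isLeftDescent (huj.not.mpr hui) (hvj.not.mpr hvi)

theorem twMul_mem_bruhatIntervalTI (hS : PreservesSimples cs θ) (hinv : ∀ w, θ (θ w) = w)
    (hw : θ w = w⁻¹) (hwi : cs.IsRightDescent w i) (hx : x ∈ bruhatIntervalTI cs θ w) :
    twMul cs θ x i ∈ bruhatIntervalTI cs θ w :=
  ⟨apply_twMul hinv hx.1, hx.2.twMul_le_of_isRightDescent hS hinv hw hwi⟩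

theorem tiCovers_twMul (hS : PreservesSimples cs θ) (hinv : ∀ w, θ (θ w) = w)
    (hw : θ w = w⁻¹) (hwi : cs.IsRightDescent w i) (hx : x ∈ bruhatIntervalTI cs θ w)
    (hxi : ¬cs.IsRightDescent x i) : tiCovers cs θ w x (twMul cs θ x i) := by
  have hMx := twMul_mem_bruhatIntervalTI hS hinv hw hwi hx
  have hMxi : cs.IsRightDescent (twMul cs θ x i) i :=
    (isRightDescent_twMul_iff hS hinv hx.1).mpr hxi
  refine ⟨hx, hMx, bruhatLE_twMul hS hinv hx.1 hxi, (twMul_ne_self cs θ x i).symm,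
    fun z hz hxz hzM => ?_⟩
  by_cases hzi : cs.IsRightDescent z i
  · -- then `z · s̲ = x`
    have hle := hzM.twMul_mono_of_isRightDescent hS hinv hz.1 hMx.1 hMxi hzi
    rw [twMul_twMul] at hle
    have hge := hxz.le_twMul_of_isRightDescent hS hinv hx.1 hz.1 hzi hxi
    right
    rw [← twMul_twMul cs θ z i, hle.antisymm hge]
  · have hle := hzM.le_twMul_of_isRightDescent hS hinv hz.1 hMx.1 hMxi hzi
    rw [twMul_twMul] at hle
    exact .inl (hle.antisymm hxz)

theorem bruhatLE_twMul_of_tiCovers (hS : PreservesSimples cs θ) (hinv : ∀ w, θ (θ w) = w)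
    {y : W} (hxy : tiCovers cs θ w x y) (hne : twMul cs θ x i ≠ y) :
    bruhatLE cs (twMul cs θ x i) (twMul cs θ y i) := by
  obtain ⟨hx, hy, hle, -, hcov⟩ := hxy
  by_cases hyi : cs.IsRightDescent y i <;> by_cases hxi : cs.IsRightDescent x i
  · exact hle.twMul_mono_of_isRightDescent hS hinv hx.1 hy.1 hyi hxi
  · -- `x ≤ y · s̲ < y` and `y` covers `x`, so `y · s̲ = x`
    have hMy := twMul_bruhatLE hS hinv hy.1 hyi
    rcases hcov _ ⟨apply_twMul hinv hy.1, hMy.trans hy.2⟩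
      (hle.le_twMul_of_isRightDescent hS hinv hx.1 hy.1 hyi hxi) hMy with h | h
    · exact absurd (by rw [← h, twMul_twMul]) hne
    · exact absurd h (twMul_ne_self cs θ y i)
  · exact (twMul_bruhatLE hS hinv hx.1 hxi).trans (hle.trans (bruhatLE_twMul hS hinv hy.1 hyi))
  · exact hle.twMul_mono_of_not_isRightDescent hS hinv hx.1 hy.1 hxi hyi

end TwistedInvolutions

end

/-- Theorem 4.4: if `s` is a right descent of the twisted involution `w`, then
`v ↦ v · s̲` is a special matching on the interval `[e, w] ⊆ Br(I(θ))`. -/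
theorem stmt_10 {B W : Type*} [Group W] {M : CoxeterMatrix B}
    (cs : CoxeterSystem M W) (θ : W ≃* W)
    (hinv : ∀ w : W, θ (θ w) = w) (hS : PreservesSimples cs θ)
    (w : W) (hw : θ w = w⁻¹) (i : B) (hd : cs.IsRightDescent w i) :
    (∀ x ∈ bruhatIntervalTI cs θ w, twMul cs θ x i ∈ bruhatIntervalTI cs θ w) ∧
    (∀ x ∈ bruhatIntervalTI cs θ w, twMul cs θ (twMul cs θ x i) i = x) ∧
    (∀ x ∈ bruhatIntervalTI cs θ w,
      tiCovers cs θ w x (twMul cs θ x i) ∨ tiCovers cs θ w (twMul cs θ x i) x) ∧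
    (∀ x y, tiCovers cs θ w x y → twMul cs θ x i ≠ y →
      bruhatLE cs (twMul cs θ x i) (twMul cs θ y i) ∧ twMul cs θ x i ≠ twMul cs θ y i) := by
  refine ⟨fun x hx => twMul_mem_bruhatIntervalTI hS hinv hw hd hx,
    fun x _ => twMul_twMul cs θ x i, fun x hx => ?_, fun x y hxy hne => ?_⟩
  · by_cases hxi : cs.IsRightDescent x i
    · have hMxi : ¬cs.IsRightDescent (twMul cs θ x i) i :=
        fun h => (isRightDescent_twMul_iff hS hinv hx.1).mp h hxi
      have := tiCovers_twMul hS hinv hw hd (twMul_mem_bruhatIntervalTI hS hinv hw hd hx) hMxi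
      rw [twMul_twMul] at this
      exact .inr this
    · exact .inl (tiCovers_twMul hS hinv hw hd hx hxi)
  · refine ⟨bruhatLE_twMul_of_tiCovers hS hinv hxy hne, fun h => hxy.2.2.2.1 ?_⟩
    rw [← twMul_twMul cs θ x i, h, twMul_twMul]
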